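/- Fix holomorphic functions a,b,c,d : Δ → ℂ with a(0) = a'(0) = b(0) = c(0) = 0, d(0) ≠ 0, and a(z)d(z) − b(z)c(z) = z² for all z ∈ Δ (the normal form with n = 1); assume det F'(z) = 0 for all z ∈ Δ*, where F(z) = z⁻¹·(a(z), b(z); c(z), d(z)), equivalently a'd' − b'c' ≡ 1 on Δ. Then b'(0)·c'(0) = −1, and if a is not identically zero then ord₀(a) ≥ ord₀(b − b'(0)·z). -/

import Mathlib

/-!
Write `β = b'(0)`, `γ = c'(0)`, `p = b - βz`, `q = c - γz` and `M = (a, b; c, d)`. Since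
`det M = z²`, the derivative of `z⁻¹M` has determinant `(a'd' - b'c' - 1) / z²`, so the null
condition gives `a'd' - b'c' = 1`; at `0`, where `a'` vanishes, this is `βγ = -1`. Hence
`ad = z(βq + γp) + pq` and `a'd' = βq' + γp' + p'q'`. If `ord₀ a = k + 1 < ord₀ p`, the second
identity gives `ord₀ q' ≥ k`, so `ord₀ q ≥ k + 1`; then the right side of the first identity
vanishes to order `k + 2`, whereas `ad` has order exactly `k + 1` because `d(0) ≠ 0`.
-/

attribute [local instance] Matrix.normedAddCommGroup Matrix.normedSpace

open Metric Matrix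

noncomputable def Disc : Set ℂ := Metric.ball (0 : ℂ) 1

noncomputable def PDisc : Set ℂ := Metric.ball (0 : ℂ) 1 \ {0}

open Filter Topology

section

variable {𝕜 : Type*} [NontriviallyNormedField 𝕜]

lemma hasDerivAt_matrix_fin_two {a b c d : 𝕜 → 𝕜} {a' b' c' d' z : 𝕜} (ha : HasDerivAt a a' z)
    (hb : HasDerivAt b b' z) (hc : HasDerivAt c c' z) (hd : HasDerivAt d d' z) :
    HasDerivAt (fun w => !![a w, b w; c w, d w]) !![a', b'; c', d'] z :=
  hasDerivAt_pi.2 fun i => hasDerivAt_pi.2 fun j => by fin_cases i <;> fin_cases j <;> simpa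

/-- With `M = (a, b; c, d)` and `det M = z²`, one has `(z⁻¹M)' = z⁻²(zM' - M)` and
`det (zM' - M) = z² det M' - z (det M)' + det M = z² (det M' - 1)`. -/
lemma det_deriv_inv_smul_matrix_fin_two {a b c d : 𝕜 → 𝕜} {z : 𝕜} (hz : z ≠ 0)
    (ha : DifferentiableAt 𝕜 a z) (hb : DifferentiableAt 𝕜 b z) (hc : DifferentiableAt 𝕜 c z)
    (hd : DifferentiableAt 𝕜 d z) (hdet : ∀ᶠ w in 𝓝 z, a w * d w - b w * c w = w ^ 2) :
    (deriv (fun w => w⁻¹ • !![a w, b w; c w, d w]) z).det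
      = (deriv a z * deriv d z - deriv b z * deriv c z - 1) / z ^ 2 := by
  have hM := hasDerivAt_matrix_fin_two ha.hasDerivAt hb.hasDerivAt hc.hasDerivAt hd.hasDerivAt
  have hdet_deriv : deriv a z * d z + a z * deriv d z - (deriv b z * c z + b z * deriv c z)
      = 2 * z := by
    have h := EventuallyEq.deriv_eq hdet
    rw [((ha.hasDerivAt.fun_mul hd.hasDerivAt).fun_sub
      (hb.hasDerivAt.fun_mul hc.hasDerivAt)).deriv, deriv_pow_field] at h
    simpa using h
  rw [show deriv (fun w => w⁻¹ • !![a w, b w; c w, d w]) z = _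
    from ((hasDerivAt_inv hz).fun_smul hM).deriv, Matrix.det_fin_two]
  simp only [smul_of, smul_cons, smul_eq_mul, smul_empty, neg_smul, neg_of, neg_cons, neg_empty,
    Fin.isValue, Matrix.add_apply, of_apply, cons_val', cons_val_zero, cons_val_fin_one,
    cons_val_one]
  field_simp
  linear_combination hdet.self_of_nhds - z * hdet_deriv

lemma deriv_sub_const_mul_id {f : 𝕜 → 𝕜} {z : 𝕜} (β : 𝕜) (hf : DifferentiableAt 𝕜 f z) :
    deriv (fun w => f w - β * w) z = deriv f z - β := by
  simpa using (hf.hasDerivAt.fun_sub ((hasDerivAt_id z).const_mul β)).deriv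

lemma le_analyticOrderAt_const_mul {f : 𝕜 → 𝕜} {z₀ : 𝕜} (β : 𝕜) (hf : AnalyticAt 𝕜 f z₀) :
    analyticOrderAt f z₀ ≤ analyticOrderAt (fun z => β * f z) z₀ := by
  rw [show (fun z => β * f z) = (fun _ => β) * f from rfl, analyticOrderAt_mul analyticAt_const hf]
  exact le_add_self

lemma analyticOrderAt_const_mul {f : 𝕜 → 𝕜} {z₀ β : 𝕜} (hβ : β ≠ 0) (hf : AnalyticAt 𝕜 f z₀) :
    analyticOrderAt (fun z => β * f z) z₀ = analyticOrderAt f z₀ := by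
  rw [show (fun z => β * f z) = (fun _ => β) * f from rfl, analyticOrderAt_mul analyticAt_const hf,
    analyticAt_const.analyticOrderAt_eq_zero.mpr hβ, zero_add]

lemma le_analyticOrderAt_mul {f g : 𝕜 → 𝕜} {z₀ : 𝕜} {m n : ℕ∞} (hf : AnalyticAt 𝕜 f z₀)
    (hg : AnalyticAt 𝕜 g z₀) (hm : m ≤ analyticOrderAt f z₀) (hn : n ≤ analyticOrderAt g z₀) :
    m + n ≤ analyticOrderAt (fun z => f z * g z) z₀ :=
  (analyticOrderAt_mul hf hg).symm ▸ add_le_add hm hn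

lemma le_analyticOrderAt_add_of_le {f g : 𝕜 → 𝕜} {z₀ : 𝕜} {n : ℕ∞}
    (hf : n ≤ analyticOrderAt f z₀) (hg : n ≤ analyticOrderAt g z₀) :
    n ≤ analyticOrderAt (fun z => f z + g z) z₀ :=
  (le_min hf hg).trans le_analyticOrderAt_add

lemma le_analyticOrderAt_sub_of_le {f g : 𝕜 → 𝕜} {z₀ : 𝕜} {n : ℕ∞}
    (hf : n ≤ analyticOrderAt f z₀) (hg : n ≤ analyticOrderAt g z₀) :
    n ≤ analyticOrderAt (fun z => f z - g z) z₀ :=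
  (le_min hf hg).trans le_analyticOrderAt_sub

theorem analyticOrderAt_le_of_normal_form [CharZero 𝕜] [CompleteSpace 𝕜] {a d p q : 𝕜 → 𝕜}
    {β γ : 𝕜} (hβ : β ≠ 0) (ha : AnalyticAt 𝕜 a 0) (hd : AnalyticAt 𝕜 d 0)
    (hp : AnalyticAt 𝕜 p 0) (hq : AnalyticAt 𝕜 q 0)
    (ha0 : a 0 = 0) (hd0 : d 0 ≠ 0) (hp0 : p 0 = 0) (hq0 : q 0 = 0)
    (hdet : ∀ᶠ z in 𝓝 0, a z * d z = z * (β * q z + γ * p z) + p z * q z)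
    (hdet' : ∀ᶠ z in 𝓝 0, deriv a z * deriv d z
      = β * deriv q z + γ * deriv p z + deriv p z * deriv q z) :
    analyticOrderAt p 0 ≤ analyticOrderAt a 0 := by
  by_contra! hlt
  obtain ⟨n, hn⟩ := WithTop.ne_top_iff_exists.mp (hlt.trans_le le_top).ne
  have hn0 : n ≠ 0 := by
    rintro rfl
    exact ha.analyticOrderAt_ne_zero.mpr ha0 hn.symm
  obtain ⟨k, rfl⟩ := Nat.exists_eq_add_one.mpr (Nat.pos_of_ne_zero hn0)
  have hp_ord : ((k + 2 : ℕ) : ℕ∞) ≤ analyticOrderAt p 0 := by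
    rw [← hn] at hlt; exact Order.add_one_le_of_lt hlt
  have hp_ord' : ((k + 1 : ℕ) : ℕ∞) ≤ analyticOrderAt p 0 :=
    (Nat.cast_le.mpr (Nat.le_succ _)).trans hp_ord
  have ha' : (k : ℕ∞) ≤ analyticOrderAt (deriv a) 0 :=
    (analyticOrderAt_deriv_ge_iff ha ha0).mpr (by rw [← hn]; push_cast; rfl)
  have hp' : (k : ℕ∞) ≤ analyticOrderAt (deriv p) 0 :=
    (analyticOrderAt_deriv_ge_iff hp hp0).mpr (by exact_mod_cast hp_ord')
  have hq' : (k : ℕ∞) ≤ analyticOrderAt (deriv q) 0 := by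
    rw [← analyticOrderAt_const_mul hβ hq.deriv, analyticOrderAt_congr
      (g := fun z => deriv a z * deriv d z - γ * deriv p z - deriv p z * deriv q z)
      (by filter_upwards [hdet'] with z hz; linear_combination -hz)]
    refine le_analyticOrderAt_sub_of_le (le_analyticOrderAt_sub_of_le ?_ ?_) ?_
    · simpa using le_analyticOrderAt_mul ha.deriv hd.deriv ha' zero_le
    · exact hp'.trans (le_analyticOrderAt_const_mul γ hp.deriv)
    · simpa using le_analyticOrderAt_mul hp.deriv hq.deriv hp' zero_le
  have hq_ord : ((k + 1 : ℕ) : ℕ∞) ≤ analyticOrderAt q 0 :=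
    (analyticOrderAt_deriv_ge_iff hq hq0).mp hq'
  have hrhs : ((k + 2 : ℕ) : ℕ∞) ≤
      analyticOrderAt (fun z => z * (β * q z + γ * p z) + p z * q z) 0 := by
    have hlin : ((k + 1 : ℕ) : ℕ∞) ≤ analyticOrderAt (fun z => β * q z + γ * p z) 0 :=
      le_analyticOrderAt_add_of_le (hq_ord.trans (le_analyticOrderAt_const_mul β hq))
        (hp_ord'.trans (le_analyticOrderAt_const_mul γ hp))
    refine le_analyticOrderAt_add_of_le ?_ ?_
    · exact le_of_eq_of_le (by push_cast; ring) (le_analyticOrderAt_mul analyticAt_id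
        ((analyticAt_const.mul hq).add (analyticAt_const.mul hp)) analyticOrderAt_id.ge hlin)
    · simpa using le_analyticOrderAt_mul hp hq hp_ord zero_le
  have had : analyticOrderAt (fun z => a z * d z) 0 = ((k + 1 : ℕ) : ℕ∞) := by
    rw [show (fun z => a z * d z) = a * d from rfl, analyticOrderAt_mul ha hd,
      hd.analyticOrderAt_eq_zero.mpr hd0, add_zero]
    exact hn.symm
  rw [← analyticOrderAt_congr hdet, had, Nat.cast_le] at hrhs
  omega

end

lemma eventually_deriv_mul_sub_deriv_mul_eq_one {a b c d : ℂ → ℂ} {U : Set ℂ}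
    (hU : IsOpen U) (hU0 : 0 ∈ U) (ha : DifferentiableOn ℂ a U) (hb : DifferentiableOn ℂ b U)
    (hc : DifferentiableOn ℂ c U) (hd : DifferentiableOn ℂ d U)
    (hdet : ∀ z ∈ U, a z * d z - b z * c z = z ^ 2)
    (hnull : ∀ z ∈ U \ {0}, (deriv (fun w => w⁻¹ • !![a w, b w; c w, d w]) z).det = 0) :
    ∀ᶠ z in 𝓝 0, deriv a z * deriv d z - deriv b z * deriv c z = 1 := by
  have hU0' := hU.mem_nhds hU0
  refine (ContinuousAt.eventuallyEq_nhds_iff_eventuallyEq_nhdsNE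
    (f := fun z => deriv a z * deriv d z - deriv b z * deriv c z) ?_ continuousAt_const).mp ?_
  · have hA := fun (f : ℂ → ℂ) (hf : DifferentiableOn ℂ f U) => (hf.analyticAt hU0').deriv
    exact ((hA a ha).mul (hA d hd) |>.sub ((hA b hb).mul (hA c hc))).continuousAt
  filter_upwards [mem_nhdsWithin_of_mem_nhds hU0', self_mem_nhdsWithin] with z hzU hz0
  have hzU' := hU.mem_nhds hzU
  have h := hnull z ⟨hzU, hz0⟩
  rw [det_deriv_inv_smul_matrix_fin_two hz0 (ha.differentiableAt hzU') (hb.differentiableAt hzU')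
    (hc.differentiableAt hzU') (hd.differentiableAt hzU')
    (by filter_upwards [hzU'] with w hw using hdet w hw), div_eq_zero_iff, sub_eq_zero] at h
  exact h.resolve_right (pow_ne_zero 2 hz0)

theorem normal_form_n_eq_one_identities
    (a b c d : ℂ → ℂ)
    (ha : DifferentiableOn ℂ a Disc) (hb : DifferentiableOn ℂ b Disc)
    (hc : DifferentiableOn ℂ c Disc) (hd : DifferentiableOn ℂ d Disc)
    (ha0 : a 0 = 0) (ha'0 : deriv a 0 = 0) (hb0 : b 0 = 0) (hc0 : c 0 = 0)
    (hd0 : d 0 ≠ 0)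
    (hdet : ∀ z ∈ Disc, a z * d z - b z * c z = z ^ 2)
    (F : ℂ → Matrix (Fin 2) (Fin 2) ℂ)
    (hF : ∀ z, F z = z⁻¹ • !![a z, b z; c z, d z])
    (hnull : ∀ z ∈ PDisc, (deriv F z).det = 0) :
    deriv b 0 * deriv c 0 = -1 ∧
    ∀ (haA : AnalyticAt ℂ a 0) (hbA : AnalyticAt ℂ (fun z => b z - deriv b 0 * z) 0),
      analyticOrderAt a 0 ≠ ⊤ → analyticOrderAt (fun z => b z - deriv b 0 * z) 0 ≤ analyticOrderAt a 0 := by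
  obtain rfl : F = fun w => w⁻¹ • !![a w, b w; c w, d w] := funext hF
  have h0 : (0 : ℂ) ∈ Disc := mem_ball_self one_pos
  have hD : Disc ∈ 𝓝 0 := isOpen_ball.mem_nhds h0
  have hunit := eventually_deriv_mul_sub_deriv_mul_eq_one isOpen_ball h0 ha hb hc hd hdet hnull
  have hβγ : deriv b 0 * deriv c 0 = -1 := by
    linear_combination -hunit.self_of_nhds + deriv d 0 * ha'0
  refine ⟨hβγ, fun _ _ _ => analyticOrderAt_le_of_normal_form (γ := deriv c 0)
    (q := fun z => c z - deriv c 0 * z)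
    (left_ne_zero_of_mul (a := deriv b 0) (by rw [hβγ]; norm_num)) (ha.analyticAt hD)
    (hd.analyticAt hD) ((hb.analyticAt hD).sub (analyticAt_const.mul analyticAt_id))
    ((hc.analyticAt hD).sub (analyticAt_const.mul analyticAt_id))
    ha0 hd0 (by simp [hb0]) (by simp [hc0]) ?_ ?_⟩
  · filter_upwards [hD] with z hz
    linear_combination hdet z hz + z ^ 2 * hβγ
  · filter_upwards [hunit, hD] with z hu hz
    have hzD := isOpen_ball.mem_nhds hz
    rw [deriv_sub_const_mul_id _ (hb.differentiableAt hzD),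
      deriv_sub_const_mul_id _ (hc.differentiableAt hzD)]
    linear_combination hu + hβγ
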